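/- Let W_n be the set of n×n matrices A with A_{ij} = 1 for j > i, A_{ii} = 2, and A_{ij} ∈ {1,2} for j < i. For n ≥ 3, an integer S equals det(A) for some A ∈ W_n if and only if 3 − F_{n-1} ≤ S ≤ 3 + F_{n-1}. -/

import Mathlib

/-!
Write `A = D + J`, where `J` is the all-ones matrix and `D` is unit lower triangular with
`0/1` entries `c i j` below the diagonal. If `D x = 1`, then `A = D (I + x 1ᵀ)`, so
`det A = 1 + ∑ x k`, and forward substitution reads `x k = 1 - ∑_{j < k} c k j * x j`. Writing
`P k` and `Q k` for the sums of the positive and of the negative parts of `x 0, …, x (k-1)`, this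
forces `1 - P k ≤ x k ≤ 1 + Q k`; conversely every such ("admissible") sequence comes from some
`D`, because all its terms satisfy `|x k| ≤ 1 + ∑_{j < k} |x j|`, so every integer in
`[-Q k, P k]` is a subset sum of `x 0, …, x (k-1)`.

Along an admissible sequence `P k ≤ F k + 1`, `Q k ≤ F k - 1` and `P k + Q k ≤ F (k+1)`, which
confines `det A = 1 + P N - Q N + x N` (with `N = n - 1`) to `[3 - F N, 3 + F N]`. The sequence
`1, 1, ±F 2, ∓F 3, ±F 4, …` of alternating sign is admissible and has `P N = F N + 1` or
`Q N = F N - 1`, according to the sign pattern; letting its term of index `N` run through its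
admissible interval yields every value in the range.
-/

open Finset Matrix

theorem Matrix.det_add_replicateCol_mul_replicateRow_of_mulVec_eq {ι R : Type*} [Fintype ι]
    [DecidableEq ι] [CommRing R] {D : Matrix ι ι R} {x u : ι → R} (h : D *ᵥ x = u)
    (v : ι → R) :
    (D + replicateCol Unit u * replicateRow Unit v).det = D.det * (1 + v ⬝ᵥ x) := by
  conv_lhs => rw [← h, replicateCol_mulVec, Matrix.mul_assoc, ← D.mul_one, Matrix.mul_assoc,
    Matrix.one_mul, ← Matrix.mul_add]
  rw [det_mul, det_one_add_replicateCol_mul_replicateRow]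

def unitLowerOf {R : Type*} [Zero R] [One R] (n : ℕ) (c : ℕ → ℕ → R) :
    Matrix (Fin n) (Fin n) R :=
  of fun i j => if (j : ℕ) < i then c i j else if i = j then 1 else 0

def forwardSubst {R : Type*} [Ring R] (c : ℕ → ℕ → R) (k : ℕ) : R :=
  1 - ∑ j ∈ (range k).attach, c k j * forwardSubst c j
decreasing_by exact mem_range.1 j.2

theorem forwardSubst_add_sum_mul {R : Type*} [Ring R] (c : ℕ → ℕ → R) (k : ℕ) :
    forwardSubst c k + ∑ j ∈ range k, c k j * forwardSubst c j = 1 := by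
  rw [forwardSubst, sum_attach (range k) fun j => c k j * forwardSubst c j, sub_add_cancel]

section unitLowerOf

variable {R : Type*} [CommRing R] {n : ℕ} {c : ℕ → ℕ → R}

theorem det_unitLowerOf : (unitLowerOf n c).det = 1 := by
  rw [det_of_isLowerTriangular]
  · simp [unitLowerOf]
  · intro i j (hij : i < j)
    simp [unitLowerOf, hij.not_gt, hij.ne]

theorem unitLowerOf_mulVec_apply (x : ℕ → R) (i : Fin n) :
    (unitLowerOf n c *ᵥ fun j => x j) i = x i + ∑ j ∈ range i, c i j * x j := by
  simp only [mulVec, dotProduct, unitLowerOf, of_apply, ite_mul, one_mul, zero_mul, Fin.ext_iff]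
  rw [Fin.sum_univ_eq_sum_range
      (fun j => if j < (i : ℕ) then c i j * x j else if (i : ℕ) = j then x j else 0),
    sum_ite, sum_ite_eq, add_comm]
  congr 1
  · simp [i.2]
  · congr 1
    ext j
    simp only [mem_filter, mem_range]
    omega

theorem det_unitLowerOf_add_one {x : ℕ → R}
    (hx : ∀ k < n, x k + ∑ j ∈ range k, c k j * x j = 1) :
    (unitLowerOf n c + of fun _ _ => 1).det = 1 + ∑ k ∈ range n, x k := by
  have hJ : (of fun _ _ => 1 : Matrix (Fin n) (Fin n) R) =
      replicateCol Unit (1 : Fin n → R) * replicateRow Unit (1 : Fin n → R) := by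
    ext
    simp [replicateCol, replicateRow, Matrix.mul_apply]
  have hsol : unitLowerOf n c *ᵥ (fun j => x j) = 1 := by
    ext i
    rw [unitLowerOf_mulVec_apply, hx i i.2, Pi.one_apply]
  rw [hJ, det_add_replicateCol_mul_replicateRow_of_mulVec_eq hsol, det_unitLowerOf, one_mul,
    one_dotProduct, Fin.sum_univ_eq_sum_range]

end unitLowerOf

def W (n : ℕ) : Set (Matrix (Fin n) (Fin n) ℤ) :=
  {A | (∀ i j : Fin n, (i : ℕ) < j → A i j = 1) ∧ (∀ i, A i i = 2) ∧
    ∀ i j : Fin n, (j : ℕ) < i → A i j = 1 ∨ A i j = 2}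

theorem mem_W_iff {n : ℕ} {A : Matrix (Fin n) (Fin n) ℤ} :
    A ∈ W n ↔ ∃ c : ℕ → ℕ → ℤ, (∀ i j, c i j = 0 ∨ c i j = 1) ∧
      A = unitLowerOf n c + of fun _ _ => 1 := by
  constructor
  · rintro ⟨hupper, hdiag, hlower⟩
    refine ⟨fun i j => if h : j < i ∧ i < n then A ⟨i, h.2⟩ ⟨j, h.1.trans h.2⟩ - 1 else 0,
      fun i j => ?_, ?_⟩
    · dsimp only
      split_ifs with h
      · rcases hlower ⟨i, h.2⟩ ⟨j, h.1.trans h.2⟩ h.1 with h' | h' <;> simp [h']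
      · simp
    · ext i j
      rcases lt_trichotomy j i with h | rfl | h
      · simp [unitLowerOf, h]
      · simp [unitLowerOf, hdiag]
      · simp [unitLowerOf, h.not_gt, h.ne, hupper i j h]
  · rintro ⟨c, hc, rfl⟩
    refine ⟨fun i j (h : i < j) => ?_, fun i => ?_, fun i j (h : j < i) => ?_⟩
    · simp [unitLowerOf, h.not_gt, h.ne]
    · simp [unitLowerOf]
    · rcases hc i j with h' | h' <;> simp [unitLowerOf, h, h']

theorem Int.posPart_negPart_cases (a : ℤ) :
    0 ≤ a ∧ a⁺ = a ∧ a⁻ = 0 ∨ a ≤ 0 ∧ a⁺ = 0 ∧ a⁻ = -a := by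
  rcases le_total 0 a with h | h
  · exact .inl ⟨h, posPart_eq_self.2 h, negPart_eq_zero.2 h⟩
  · exact .inr ⟨h, posPart_eq_zero.2 h, negPart_eq_neg.2 h⟩

def posPrefix (x : ℕ → ℤ) (k : ℕ) : ℤ := ∑ j ∈ range k, (x j)⁺

def negPrefix (x : ℕ → ℤ) (k : ℕ) : ℤ := ∑ j ∈ range k, (x j)⁻

section prefixes

variable (x : ℕ → ℤ) (k : ℕ)

theorem posPrefix_nonneg : 0 ≤ posPrefix x k := sum_nonneg fun j _ => posPart_nonneg (x j)

theorem negPrefix_nonneg : 0 ≤ negPrefix x k := sum_nonneg fun j _ => negPart_nonneg (x j)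

theorem posPrefix_succ : posPrefix x (k + 1) = posPrefix x k + (x k)⁺ := sum_range_succ _ k

theorem negPrefix_succ : negPrefix x (k + 1) = negPrefix x k + (x k)⁻ := sum_range_succ _ k

theorem posPrefix_sub_negPrefix : posPrefix x k - negPrefix x k = ∑ j ∈ range k, x j := by
  simp only [posPrefix, negPrefix, ← sum_sub_distrib, posPart_sub_negPart]

theorem posPrefix_add_negPrefix : posPrefix x k + negPrefix x k = ∑ j ∈ range k, |x j| := by
  simp only [posPrefix, negPrefix, ← sum_add_distrib, posPart_add_negPart]

theorem sum_mul_mem_Icc {c : ℕ → ℤ} (hc : ∀ j, c j = 0 ∨ c j = 1) :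
    ∑ j ∈ range k, c j * x j ∈ Set.Icc (-negPrefix x k) (posPrefix x k) := by
  rw [negPrefix, ← sum_neg_distrib]
  constructor <;> refine sum_le_sum fun j _ => ?_ <;>
    rcases hc j with h | h <;> rcases (x j).posPart_negPart_cases with ⟨_, _, _⟩ | ⟨_, _, _⟩ <;>
      simp only [h] <;> omega

variable {n : ℕ} (v : ℤ)

theorem posPrefix_update_of_le (h : k ≤ n) :
    posPrefix (Function.update x n v) k = posPrefix x k :=
  sum_congr rfl fun j hj => by rw [Function.update_of_ne (by simp at hj; omega)]

theorem negPrefix_update_of_le (h : k ≤ n) :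
    negPrefix (Function.update x n v) k = negPrefix x k :=
  sum_congr rfl fun j hj => by rw [Function.update_of_ne (by simp at hj; omega)]

end prefixes

theorem exists_subset_sum_eq {y : ℕ → ℤ} {L : ℕ}
    (hy : ∀ k < L, |y k| ≤ 1 + ∑ j ∈ range k, |y j|) {t : ℤ}
    (ht : t ∈ Set.Icc (-negPrefix y L) (posPrefix y L)) :
    ∃ s ⊆ range L, ∑ j ∈ s, y j = t := by
  induction L generalizing t with
  | zero =>
    refine ⟨∅, empty_subset _, ?_⟩
    simp only [posPrefix, negPrefix, range_zero, sum_empty, Set.mem_Icc] at ht ⊢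
    omega
  | succ L ih =>
    have ih := @ih (fun k hk => hy k (by omega))
    have hsub : range L ⊆ range (L + 1) := range_subset_range.2 L.le_succ
    by_cases ht' : t ∈ Set.Icc (-negPrefix y L) (posPrefix y L)
    · obtain ⟨s, hs, rfl⟩ := ih ht'
      exact ⟨s, hs.trans hsub, rfl⟩
    · have hyL := hy L L.lt_succ_self
      rw [← posPrefix_add_negPrefix] at hyL
      rw [Set.mem_Icc] at ht ht'
      rw [posPrefix_succ, negPrefix_succ] at ht
      obtain ⟨s, hs, hsum⟩ := @ih (t - y L) (by
        rcases (y L).posPart_negPart_cases with ⟨h, hp, hn⟩ | ⟨h, hp, hn⟩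
        · rw [abs_of_nonneg h] at hyL
          rw [hp, hn] at ht
          constructor <;> omega
        · rw [abs_of_nonpos h] at hyL
          rw [hp, hn] at ht
          constructor <;> omega)
      refine ⟨insert L s, insert_subset (self_mem_range_succ L) (hs.trans hsub), ?_⟩
      rw [sum_insert fun h => notMem_range_self (hs h), hsum, add_sub_cancel]

def Admissible (n : ℕ) (x : ℕ → ℤ) : Prop :=
  ∀ k < n, x k ∈ Set.Icc (1 - posPrefix x k) (1 + negPrefix x k)

theorem admissible_of_add_sum_mul_eq_one {n : ℕ} {x : ℕ → ℤ} {c : ℕ → ℕ → ℤ}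
    (hc : ∀ k j, c k j = 0 ∨ c k j = 1) (hx : ∀ k < n, x k + ∑ j ∈ range k, c k j * x j = 1) :
    Admissible n x := fun k hk => by
  obtain ⟨h₁, h₂⟩ := sum_mul_mem_Icc x k (hc k)
  have := hx k hk
  constructor <;> omega

namespace Admissible

variable {n : ℕ} {x : ℕ → ℤ}

theorem abs_le (hx : Admissible n x) {k : ℕ} (hk : k < n) :
    |x k| ≤ 1 + ∑ j ∈ range k, |x j| := by
  obtain ⟨h₁, h₂⟩ := hx k hk
  have := posPrefix_nonneg x k
  have := negPrefix_nonneg x k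
  rw [← posPrefix_add_negPrefix, _root_.abs_le]
  omega

theorem exists_coeffs (hx : Admissible n x) :
    ∃ c : ℕ → ℕ → ℤ, (∀ k j, c k j = 0 ∨ c k j = 1) ∧
      ∀ k < n, x k + ∑ j ∈ range k, c k j * x j = 1 := by
  have hs : ∀ k, ∃ s : Finset ℕ, k < n → s ⊆ range k ∧ ∑ j ∈ s, x j = 1 - x k := by
    intro k
    by_cases hk : k < n
    · obtain ⟨h₁, h₂⟩ := hx k hk
      obtain ⟨s, hs, hsum⟩ := exists_subset_sum_eq (y := x) (t := 1 - x k)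
        (fun j hj => hx.abs_le (hj.trans hk)) (by constructor <;> omega)
      exact ⟨s, fun _ => ⟨hs, hsum⟩⟩
    · exact ⟨∅, fun h => absurd h hk⟩
  choose s hs using hs
  refine ⟨fun k j => if j ∈ s k then 1 else 0, fun k j => by by_cases j ∈ s k <;> simp [*],
    fun k hk => ?_⟩
  simp only [ite_mul, one_mul, zero_mul, sum_ite_mem, inter_eq_right.2 (hs k hk).1, (hs k hk).2,
    add_sub_cancel]

theorem prefixes_le_fib (hx : Admissible n x) {k : ℕ} (hk : 1 ≤ k) (hkn : k ≤ n) :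
    posPrefix x k ≤ Nat.fib k + 1 ∧ negPrefix x k + 1 ≤ Nat.fib k ∧
      posPrefix x k + negPrefix x k ≤ Nat.fib (k + 1) := by
  induction k, hk using Nat.le_induction with
  | base =>
    obtain ⟨h₁, h₂⟩ := hx 0 (by omega)
    simp only [posPrefix, negPrefix, range_zero, sum_empty] at h₁ h₂
    simp [posPrefix, negPrefix, show x 0 = 1 by omega]
  | succ k hk ih =>
    obtain ⟨hP, hQ, hPQ⟩ := ih (by omega)
    obtain ⟨h₁, h₂⟩ := hx k (by omega)
    have hfib : (Nat.fib (k + 1 + 1) : ℤ) = Nat.fib k + Nat.fib (k + 1) := mod_cast Nat.fib_add_two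
    have : (Nat.fib k : ℤ) ≤ Nat.fib (k + 1) := mod_cast Nat.fib_le_fib_succ
    rw [posPrefix_succ, negPrefix_succ]
    rcases (x k).posPart_negPart_cases with ⟨_, hp, hn⟩ | ⟨_, hp, hn⟩ <;> rw [hp, hn] <;> omega

theorem one_add_sum_mem_Icc (hx : Admissible (n + 1) x) (hn : 1 ≤ n) :
    1 + ∑ k ∈ range (n + 1), x k ∈ Set.Icc (3 - Nat.fib n : ℤ) (3 + Nat.fib n) := by
  obtain ⟨hP, hQ, -⟩ := hx.prefixes_le_fib hn n.le_succ
  obtain ⟨h₁, h₂⟩ := hx n n.lt_succ_self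
  rw [sum_range_succ, ← posPrefix_sub_negPrefix]
  constructor <;> omega

theorem update (hx : Admissible n x) {v : ℤ}
    (hv : v ∈ Set.Icc (1 - posPrefix x n) (1 + negPrefix x n)) :
    Admissible (n + 1) (Function.update x n v) := by
  intro k hk
  rw [posPrefix_update_of_le x k v (by omega), negPrefix_update_of_le x k v (by omega)]
  rcases (Nat.lt_succ_iff.1 hk).lt_or_eq with hk | rfl
  · rw [Function.update_of_ne hk.ne]
    exact hx k hk
  · rwa [Function.update_self]

end Admissible

def altFib (b k : ℕ) : ℤ := if k < 2 then 1 else (-1) ^ (k + b) * Nat.fib k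

section altFib

variable {b k : ℕ}

theorem altFib_of_even (hk : 2 ≤ k) (h : Even (k + b)) : altFib b k = Nat.fib k := by
  rw [altFib, if_neg (by omega), h.neg_one_pow, one_mul]

theorem altFib_of_odd (hk : 2 ≤ k) (h : Odd (k + b)) : altFib b k = -Nat.fib k := by
  rw [altFib, if_neg (by omega), h.neg_one_pow, neg_one_mul]

theorem prefixes_altFib (hk : 2 ≤ k) :
    (Odd (k + b) → posPrefix (altFib b) k = Nat.fib k + 1 ∧
      negPrefix (altFib b) k + 1 = Nat.fib (k - 1)) ∧
    (Even (k + b) → posPrefix (altFib b) k = Nat.fib (k - 1) + 1 ∧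
      negPrefix (altFib b) k + 1 = Nat.fib k) := by
  induction k, hk using Nat.le_induction with
  | base => simp [posPrefix, negPrefix, sum_range_succ, altFib]
  | succ k hk ih =>
    have hfib : (Nat.fib (k + 1) : ℤ) = Nat.fib (k - 1) + Nat.fib k :=
      mod_cast Nat.fib_add_one (by omega)
    have : 0 ≤ (Nat.fib k : ℤ) := Nat.cast_nonneg _
    rw [posPrefix_succ, negPrefix_succ, Nat.add_sub_cancel, add_right_comm]
    rcases Nat.even_or_odd (k + b) with h | h
    · obtain ⟨hP, hQ⟩ := ih.2 h
      rw [altFib_of_even hk h, posPart_eq_self.2 this, negPart_eq_zero.2 this]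
      exact ⟨fun _ => by omega, fun h' => absurd h' (by simpa [parity_simps] using h)⟩
    · obtain ⟨hP, hQ⟩ := ih.1 h
      rw [altFib_of_odd hk h, posPart_eq_zero.2 (by omega), negPart_eq_neg.2 (by omega)]
      exact ⟨fun h' => absurd h' (by simpa [parity_simps] using h), fun _ => by omega⟩

theorem admissible_altFib (b n : ℕ) : Admissible n (altFib b) := by
  intro k _
  have := posPrefix_nonneg (altFib b) k
  have := negPrefix_nonneg (altFib b) k
  rcases lt_or_ge k 2 with hk | hk
  · interval_cases k <;> simp [posPrefix, negPrefix, altFib]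
  · have : 1 ≤ Nat.fib k := Nat.fib_pos.2 (by omega)
    rcases Nat.even_or_odd (k + b) with h | h
    · have := ((prefixes_altFib hk).2 h).2
      rw [altFib_of_even hk h]
      constructor <;> omega
    · have := ((prefixes_altFib hk).1 h).1
      rw [altFib_of_odd hk h]
      constructor <;> omega

end altFib

theorem exists_admissible_one_add_sum_eq {n : ℕ} (hn : 2 ≤ n) {S : ℤ}
    (hS : S ∈ Set.Icc (3 - Nat.fib n : ℤ) (3 + Nat.fib n)) :
    ∃ x, Admissible (n + 1) x ∧ 1 + ∑ k ∈ range (n + 1), x k = S := by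
  obtain ⟨hS₁, hS₂⟩ := hS
  -- the parity `b` gives `P = F n + 1` when `3 ≤ S`, and `Q = F n - 1` otherwise
  set b := if 3 ≤ S then n + 1 else n
  set P := posPrefix (altFib b) n
  set Q := negPrefix (altFib b) n
  have hPQ : 2 - Q ≤ S ∧ S ≤ 2 + P := by
    have := posPrefix_nonneg (altFib b) n
    have := negPrefix_nonneg (altFib b) n
    by_cases h : 3 ≤ S
    · have := ((prefixes_altFib (b := b) hn).1 (by simp [b, h, parity_simps])).1
      omega
    · have := ((prefixes_altFib (b := b) hn).2 (by simp [b, h, parity_simps])).2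
      omega
  refine ⟨Function.update (altFib b) n (S - 1 - (P - Q)),
    (admissible_altFib b n).update (by constructor <;> omega), ?_⟩
  rw [sum_range_succ, ← posPrefix_sub_negPrefix, posPrefix_update_of_le _ _ _ le_rfl,
    negPrefix_update_of_le _ _ _ le_rfl, Function.update_self]
  ring

/-- For n ≥ 3, an integer S is det(A) for some A ∈ W_n iff
3 − F_{n-1} ≤ S ≤ 3 + F_{n-1}. -/
theorem stmt_17 (n : ℕ) (hn : 3 ≤ n) (S : ℤ) :
    (∃ A : Matrix (Fin n) (Fin n) ℤ,
      (∀ i j : Fin n, (i : ℕ) < (j : ℕ) → A i j = 1) ∧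
      (∀ i : Fin n, A i i = 2) ∧
      (∀ i j : Fin n, (j : ℕ) < (i : ℕ) → A i j = 1 ∨ A i j = 2) ∧
      A.det = S) ↔
    (3 - (Nat.fib (n - 1) : ℤ) ≤ S ∧ S ≤ 3 + (Nat.fib (n - 1) : ℤ)) := by
  obtain ⟨N, rfl⟩ : ∃ N, n = N + 1 := ⟨n - 1, by omega⟩
  rw [Nat.add_sub_cancel]
  constructor
  · rintro ⟨A, h₁, h₂, h₃, rfl⟩
    obtain ⟨c, hc, rfl⟩ := mem_W_iff.1 ⟨h₁, h₂, h₃⟩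
    have hx := fun k (_ : k < N + 1) => forwardSubst_add_sum_mul c k
    rw [det_unitLowerOf_add_one hx]
    exact (admissible_of_add_sum_mul_eq_one hc hx).one_add_sum_mem_Icc (by omega)
  · intro hS
    obtain ⟨x, hx, rfl⟩ := exists_admissible_one_add_sum_eq (by omega) hS
    obtain ⟨c, hc, hcx⟩ := hx.exists_coeffs
    obtain ⟨h₁, h₂, h₃⟩ := mem_W_iff.2 ⟨c, hc, rfl⟩
    exact ⟨_, h₁, h₂, h₃, det_unitLowerOf_add_one hcx⟩
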